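/- arXiv:2108.10287 — 2 statements merged into one kernel-verified Lean document; each statement's English description precedes it below -/
import Mathlib

section
/- Let 𝔻 be the unit disk, n ≥ 0 an integer, and for φ ∈ L^p(𝔻) with 2 < p < ∞ define P_n φ(z) = −(1/π) ∬_𝔻 [φ(ζ)/(ζ−z) + z^{2n+1} φ(ζ)̄/(1−ζ̄z)] dA(ζ). Then Re[z^{−n} P_n φ(z)] = 0 for all z on the unit circle. -/
/-!
On the unit circle `conj z = z⁻¹`, so `1 - conj ζ * z = -z * (conj ζ - conj z)`. Hence, after
multiplication by `z⁻ⁿ`, the second term of the integrand is minus the conjugate of the first: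
the integrand is `c * (w - conj w)` with `c = -1/π` real, pointwise purely imaginary, and
conjugation commutes with the Bochner integral, so the integral is purely imaginary as well.
-/

open Filter MeasureTheory ComplexConjugate

theorem Complex.re_eq_zero_of_conj_eq_neg {w : ℂ} (h : conj w = -w) : w.re = 0 := by
  have := congrArg Complex.re h
  rw [Complex.conj_re, Complex.neg_re] at this
  linarith

theorem re_integral_eq_zero_of_conj_eq_neg {α : Type*} [MeasurableSpace α] {μ : Measure α}
    {f : α → ℂ} (hf : ∀ x, conj (f x) = -f x) : (∫ x, f x ∂μ).re = 0 := by
  refine Complex.re_eq_zero_of_conj_eq_neg ?_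
  rw [← integral_conj, ← integral_neg]
  exact integral_congr_ae (Eventually.of_forall hf)

theorem inv_pow_mul_reflection_eq_neg_conj {z : ℂ} (hz : ‖z‖ = 1) (n : ℕ) (ζ a : ℂ) :
    (z ^ n)⁻¹ * (z ^ (2 * n + 1) * conj a / (1 - conj ζ * z))
      = -conj ((z ^ n)⁻¹ * (a / (ζ - z))) := by
  have hz0 : z ≠ 0 := by rintro rfl; simp at hz
  have hconj : conj z = z⁻¹ := (Complex.inv_eq_conj hz).symm
  have hfactor : 1 - conj ζ * z = -z * (conj ζ - z⁻¹) := by field_simp; ring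
  simp only [hfactor, map_mul, map_inv₀, map_pow, map_div₀, map_sub, hconj, inv_pow, inv_inv]
  by_cases hζ : conj ζ - z⁻¹ = 0
  · simp [hζ]
  · field_simp
    ring

theorem Pn_boundary_condition_general
    (n : ℕ) (φ : ℂ → ℂ) :
    ∀ z : ℂ, ‖z‖ = 1 →
      ((z ^ n)⁻¹ *
        (-(1 / (Real.pi : ℂ)) * ∫ ζ in Metric.ball (0:ℂ) 1,
          (φ ζ / (ζ - z)
            + z ^ (2 * n + 1) * (starRingEnd ℂ) (φ ζ) / (1 - (starRingEnd ℂ) ζ * z)))).re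
      = 0 := by
  intro z hz
  rw [← integral_const_mul, ← integral_const_mul]
  refine re_integral_eq_zero_of_conj_eq_neg fun ζ => ?_
  set w := (z ^ n)⁻¹ * (φ ζ / (ζ - z))
  have hw : (z ^ n)⁻¹ * (-(1 / (Real.pi : ℂ)) * (φ ζ / (ζ - z)
      + z ^ (2 * n + 1) * conj (φ ζ) / (1 - conj ζ * z)))
      = -(1 / (Real.pi : ℂ)) * (w - conj w) := by
    linear_combination -(1 / (Real.pi : ℂ)) * inv_pow_mul_reflection_eq_neg_conj hz n ζ (φ ζ)
  have hπ : conj (-(1 / (Real.pi : ℂ))) = -(1 / (Real.pi : ℂ)) := by simp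
  rw [hw, map_mul, hπ, map_sub, Complex.conj_conj, ← neg_sub, mul_neg]

/-- For `φ ∈ L^p(𝔻)`, `2 < p < ∞`, the modified Cauchy-Green operator
`P_n φ(z) = -(1/π) ∬_𝔻 [φ(ζ)/(ζ-z) + z^{2n+1} conj(φ(ζ))/(1-conj(ζ)z)] dA(ζ)`
satisfies the Riemann–Hilbert boundary condition `Re[z^{-n} P_n φ(z)] = 0` on `|z| = 1`. -/
theorem Pn_boundary_condition
    (n : ℕ) (p : ℝ) (hp : 2 < p) (φ : ℂ → ℂ)
    (hφ : MemLp φ (ENNReal.ofReal p) (volume.restrict (Metric.ball (0:ℂ) 1))) :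
    ∀ z : ℂ, ‖z‖ = 1 →
      ((z ^ n)⁻¹ *
        (-(1 / (Real.pi : ℂ)) * ∫ ζ in Metric.ball (0:ℂ) 1,
          (φ ζ / (ζ - z)
            + z ^ (2 * n + 1) * (starRingEnd ℂ) (φ ζ) / (1 - (starRingEnd ℂ) ζ * z)))).re
      = 0 :=
  Pn_boundary_condition_general n φ
end

section
/- Let w be holomorphic in the unit disk 𝔻, continuous up to the boundary circle S¹, and suppose Re(z^{−n} w(z)) = γ(z) on S¹, where n > 0 is an integer and γ ∈ C^β(S¹) for some 0 < β < 1. Then w(z) = z^n · 𝒮γ(z) + Σ_{k=0}^{2n} c_k z^k on 𝔻, where 𝒮γ(z) = (1/(2πi)) ∫_{S¹} γ(t)·(t+z)/(t−z)·dt/t is the Schwarz integral and c₀, …, c_{2n} are complex constants. -/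
/-!
On the unit circle `Re(t⁻ⁿ w) = γ` says `2γ = t⁻ⁿ w + tⁿ w̄`, since `t̄ = t⁻¹`. Splitting the Schwarz
kernel as `(t + z)/((t - z) t) = 2/(t - z) - 1/t`, `zⁿ 𝒮γ(z)` becomes a sum of three Cauchy-type
integrals. The first, of `zⁿ t⁻ⁿ w(t)/(t - z)`, is `w(z)` minus the Taylor polynomial of `w` of
degree `< n`, by the Cauchy formula and the Cauchy integrals for the Taylor coefficients. The
second, of `zⁿ tⁿ w̄(t)/(t - z)`, is a polynomial of degree `≤ 2n` in `z`: after reflection in the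
circle, the integrals of `w̄(t) tᵏ` and `w̄(t)/(t - z)` are conjugated Taylor coefficients of `w`.
The third is `zⁿ` times the mean of `γ`.
-/

open Filter Topology Set MeasureTheory Metric
open Complex ComplexConjugate Real Polynomial

lemma pow_div_pow_mul_sub {K : Type*} [Field K] (n : ℕ) {t z : K} (ht : t ≠ 0)
    (htz : t - z ≠ 0) :
    z ^ n / (t ^ n * (t - z)) = 1 / (t - z) - ∑ k ∈ Finset.range n, z ^ k / t ^ (k + 1) := by
  induction n with
  | zero => simp
  | succ n ih =>
    have hshift : ∑ k ∈ Finset.range n, z ^ (k + 1) / t ^ (k + 1 + 1) =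
        z / t * ∑ k ∈ Finset.range n, z ^ k / t ^ (k + 1) := by
      rw [Finset.mul_sum]
      refine Finset.sum_congr rfl fun k _ => ?_
      field_simp
      ring
    have hsum : ∑ k ∈ Finset.range n, z ^ k / t ^ (k + 1) =
        1 / (t - z) - z ^ n / (t ^ n * (t - z)) := by
      rw [ih]
      ring
    rw [Finset.sum_range_succ', hshift, hsum]
    field_simp
    ring

lemma pow_div_sub {K : Type*} [Field K] (n : ℕ) {t z : K} (htz : t - z ≠ 0) :
    t ^ n / (t - z) = z ^ n / (t - z) + ∑ k ∈ Finset.range n, t ^ k * z ^ (n - 1 - k) := by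
  have h := geom_sum₂_mul t z n
  field_simp
  linear_combination -h

lemma sub_ne_zero_of_mem_sphere {t z : ℂ} (ht : t ∈ sphere (0 : ℂ) 1)
    (hz : z ∈ ball (0 : ℂ) 1) : t - z ≠ 0 :=
  sub_ne_zero.2 (sphere_disjoint_ball.ne_of_mem ht hz)

lemma conj_circleIntegral_unit (f : ℂ → ℂ) :
    conj (∮ t in C(0, 1), f t) = -∮ t in C(0, 1), conj (f t) / t ^ 2 := by
  simp only [circleIntegral, ← intervalIntegral.intervalIntegral_conj,
    ← intervalIntegral.integral_neg]
  refine intervalIntegral.integral_congr fun θ _ => ?_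
  have hθ : circleMap 0 1 θ ≠ 0 := circleMap_ne_center one_ne_zero
  have hconj : conj (circleMap 0 1 θ) = (circleMap 0 1 θ)⁻¹ := (inv_eq_conj (by simp)).symm
  simp only [deriv_circleMap, smul_eq_mul, map_mul, conj_I, hconj]
  field_simp

lemma circleIntegral_div_sub_eq {w : ℂ → ℂ} (hd : DifferentiableOn ℂ w (ball 0 1))
    (hc : ContinuousOn w (closedBall 0 1)) {z : ℂ} (hz : z ∈ ball (0 : ℂ) 1) :
    (∮ t in C(0, 1), w t / (t - z)) = 2 * π * I * w z :=
  circleIntegral_div_sub_of_differentiable_on_off_countable countable_empty hz hc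
    fun _ hx => hd.differentiableAt (isOpen_ball.mem_nhds hx.1)

/-- For `w` holomorphic on the disk this is its `k`-th Taylor coefficient at `0`. -/
noncomputable def cauchyCoeff (w : ℂ → ℂ) (k : ℕ) : ℂ :=
  (2 * π * I)⁻¹ * ∮ t in C(0, 1), w t / t ^ (k + 1)

lemma circleIntegral_div_pow_eq (w : ℂ → ℂ) (k : ℕ) :
    (∮ t in C(0, 1), w t / t ^ (k + 1)) = 2 * π * I * cauchyCoeff w k := by
  rw [cauchyCoeff, mul_inv_cancel_left₀ two_pi_I_ne_zero]

lemma circleIntegral_conj_mul_pow (w : ℂ → ℂ) (k : ℕ) :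
    (∮ t in C(0, 1), conj (w t) * t ^ k) = 2 * π * I * conj (cauchyCoeff w (k + 1)) := by
  have hcongr : EqOn (fun t => conj (w t / t ^ (k + 1 + 1)) / t ^ 2)
      (fun t => conj (w t) * t ^ k) (sphere 0 1) := by
    intro t ht
    have ht0 : t ≠ 0 := ne_zero_of_mem_unit_sphere ⟨t, ht⟩
    simp only [map_div₀, map_pow, ← inv_eq_conj (show ‖t‖ = 1 by simpa using ht), inv_pow]
    field_simp
    ring
  have h := conj_circleIntegral_unit fun t => w t / t ^ (k + 1 + 1)
  rw [circleIntegral.integral_congr zero_le_one hcongr, circleIntegral_div_pow_eq] at h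
  simp only [map_mul, conj_I, conj_ofReal, map_ofNat] at h
  linear_combination h

lemma one_sub_conj_mul_ne_zero {z t : ℂ} (hz : z ∈ ball (0 : ℂ) 1)
    (ht : t ∈ closedBall (0 : ℂ) 1) : 1 - conj z * t ≠ 0 := by
  rw [mem_ball_zero_iff] at hz
  rw [mem_closedBall_zero_iff] at ht
  refine sub_ne_zero.2 fun h => ?_
  have : ‖conj z * t‖ < 1 := by
    rw [norm_mul, RCLike.norm_conj]
    nlinarith [norm_nonneg z, norm_nonneg t]
  simp [← h] at this

lemma circleIntegral_conj_div_sub {w : ℂ → ℂ} (hd : DifferentiableOn ℂ w (ball 0 1))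
    (hc : ContinuousOn w (closedBall 0 1)) {z : ℂ} (hz : z ∈ ball (0 : ℂ) 1) :
    (∮ t in C(0, 1), conj (w t) / (t - z)) = 2 * π * I * conj (w 0) := by
  -- Reflecting in the circle turns `1/(t - z)` into `t/(1 - z̄ t)`, so the conjugate integral is
  -- a Cauchy integral at `0` of the holomorphic function `g`.
  set g : ℂ → ℂ := fun t => w t / (1 - conj z * t)
  have hne : ∀ t ∈ closedBall (0 : ℂ) 1, 1 - conj z * t ≠ 0 := fun t ht =>
    one_sub_conj_mul_ne_zero hz ht
  have hgd : DifferentiableOn ℂ g (ball 0 1) :=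
    hd.div (by fun_prop) fun t ht => hne t (ball_subset_closedBall ht)
  have hgc : ContinuousOn g (closedBall 0 1) := hc.div (by fun_prop) hne
  have hcongr : EqOn (fun t => conj (conj (w t) / (t - z)) / t ^ 2) (fun t => g t / (t - 0))
      (sphere 0 1) := by
    intro t ht
    have ht0 : t ≠ 0 := ne_zero_of_mem_unit_sphere ⟨t, ht⟩
    have h1 := hne t (sphere_subset_closedBall ht)
    simp only [g, map_div₀, conj_conj, map_sub, ← inv_eq_conj (show ‖t‖ = 1 by simpa using ht),
      sub_zero]
    field_simp
  have h := conj_circleIntegral_unit fun t => conj (w t) / (t - z)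
  rw [circleIntegral.integral_congr zero_le_one hcongr,
    circleIntegral_div_sub_eq hgd hgc (mem_ball_self one_pos)] at h
  simp only [g, mul_zero, sub_zero, div_one] at h
  rw [← conj_conj (∮ t in C(0, 1), conj (w t) / (t - z)), h]
  simp only [map_neg, map_mul, conj_I, conj_ofReal, map_ofNat]
  ring

lemma pow_mul_circleIntegral_div_pow_mul_sub {w : ℂ → ℂ} (hd : DifferentiableOn ℂ w (ball 0 1))
    (hc : ContinuousOn w (closedBall 0 1)) {z : ℂ} (hz : z ∈ ball (0 : ℂ) 1) (n : ℕ) :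
    z ^ n * (∮ t in C(0, 1), w t / (t ^ n * (t - z))) =
      2 * π * I * (w z - ∑ k ∈ Finset.range n, cauchyCoeff w k * z ^ k) := by
  have hws : ContinuousOn w (sphere 0 1) := hc.mono sphere_subset_closedBall
  have hne : ∀ t ∈ sphere (0 : ℂ) 1, t ≠ 0 := fun t ht => ne_zero_of_mem_unit_sphere ⟨t, ht⟩
  have hcongr : EqOn (fun t => z ^ n * (w t / (t ^ n * (t - z))))
      (fun t => w t / (t - z) - ∑ k ∈ Finset.range n, z ^ k * (w t / t ^ (k + 1)))
      (sphere 0 1) := by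
    intro t ht
    have h := pow_div_pow_mul_sub n (hne t ht) (sub_ne_zero_of_mem_sphere ht hz)
    calc z ^ n * (w t / (t ^ n * (t - z))) = w t * (z ^ n / (t ^ n * (t - z))) := by ring
      _ = _ := by
        rw [h, mul_sub, Finset.mul_sum]
        congr 1
        · ring
        · exact Finset.sum_congr rfl fun k _ => by ring
  have hcont : ∀ k, ContinuousOn (fun t => z ^ k * (w t / t ^ (k + 1))) (sphere 0 1) := fun k =>
    continuousOn_const.mul (hws.div (by fun_prop) fun t ht => pow_ne_zero _ (hne t ht))
  rw [← circleIntegral.integral_const_mul, circleIntegral.integral_congr zero_le_one hcongr,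
    circleIntegral.integral_sub, circleIntegral.integral_fun_sum,
    circleIntegral_div_sub_eq hd hc hz]
  · simp only [circleIntegral.integral_const_mul, circleIntegral_div_pow_eq, mul_sub,
      Finset.mul_sum]
    congr 1
    exact Finset.sum_congr rfl fun k _ => by ring
  · exact fun k _ => (hcont k).circleIntegrable zero_le_one
  · exact (hws.div (by fun_prop) fun t ht => sub_ne_zero_of_mem_sphere ht hz).circleIntegrable
      zero_le_one
  · exact (continuousOn_finsetSum _ fun k _ => hcont k).circleIntegrable zero_le_one

lemma circleIntegral_conj_mul_pow_div_sub {w : ℂ → ℂ} (hd : DifferentiableOn ℂ w (ball 0 1))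
    (hc : ContinuousOn w (closedBall 0 1)) {z : ℂ} (hz : z ∈ ball (0 : ℂ) 1) (n : ℕ) :
    (∮ t in C(0, 1), conj (w t) * t ^ n / (t - z)) = 2 * π * I *
      (conj (w 0) * z ^ n +
        ∑ k ∈ Finset.range n, conj (cauchyCoeff w (k + 1)) * z ^ (n - 1 - k)) := by
  have hws : ContinuousOn (fun t => conj (w t)) (sphere 0 1) :=
    continuous_conj.comp_continuousOn (hc.mono sphere_subset_closedBall)
  have hcongr : EqOn (fun t => conj (w t) * t ^ n / (t - z))
      (fun t => z ^ n * (conj (w t) / (t - z)) +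
        ∑ k ∈ Finset.range n, z ^ (n - 1 - k) * (conj (w t) * t ^ k))
      (sphere 0 1) := by
    intro t ht
    have h := pow_div_sub n (sub_ne_zero_of_mem_sphere ht hz)
    calc conj (w t) * t ^ n / (t - z) = conj (w t) * (t ^ n / (t - z)) := by ring
      _ = _ := by
        rw [h, mul_add, Finset.mul_sum]
        congr 1
        · ring
        · exact Finset.sum_congr rfl fun k _ => by ring
  have hcont : ∀ k, ContinuousOn (fun t => z ^ (n - 1 - k) * (conj (w t) * t ^ k))
      (sphere 0 1) :=
    fun k => continuousOn_const.mul (hws.mul (by fun_prop))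
  rw [circleIntegral.integral_congr zero_le_one hcongr, circleIntegral.integral_add,
    circleIntegral.integral_fun_sum, circleIntegral.integral_const_mul,
    circleIntegral_conj_div_sub hd hc hz]
  · simp only [circleIntegral.integral_const_mul, circleIntegral_conj_mul_pow, mul_add,
      Finset.mul_sum]
    congr 1
    · ring
    · exact Finset.sum_congr rfl fun k _ => by ring
  · exact fun k _ => (hcont k).circleIntegrable zero_le_one
  · exact (continuousOn_const.mul (hws.div (by fun_prop) fun t ht =>
      sub_ne_zero_of_mem_sphere ht hz)).circleIntegrable zero_le_one
  · exact (continuousOn_finsetSum _ fun k _ => hcont k).circleIntegrable zero_le_one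

lemma two_mul_re_inv_pow_mul {t : ℂ} (ht : ‖t‖ = 1) (n : ℕ) (u : ℂ) :
    2 * ((((t ^ n)⁻¹ * u).re : ℝ) : ℂ) = u / t ^ n + conj u * t ^ n := by
  have ht0 : t ≠ 0 := by
    rintro rfl
    simp at ht
  rw [re_eq_add_conj, map_mul, map_inv₀, map_pow, ← inv_eq_conj ht, inv_pow, inv_inv]
  field_simp

noncomputable def schwarzIntegral (γ : ℂ → ℝ) (z : ℂ) : ℂ :=
  1 / (2 * π * I) * ∮ t in C(0, 1), (γ t : ℂ) * ((t + z) / (t - z)) / t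

lemma pow_mul_schwarzIntegral {n : ℕ} {w : ℂ → ℂ} {γ : ℂ → ℝ}
    (hd : DifferentiableOn ℂ w (ball 0 1)) (hc : ContinuousOn w (closedBall 0 1))
    (hbc : ∀ t : ℂ, ‖t‖ = 1 → ((t ^ n)⁻¹ * w t).re = γ t) {z : ℂ} (hz : z ∈ ball (0 : ℂ) 1) :
    z ^ n * schwarzIntegral γ z = w z - ∑ k ∈ Finset.range n, cauchyCoeff w k * z ^ k
      + z ^ n * (conj (w 0) * z ^ n +
        ∑ k ∈ Finset.range n, conj (cauchyCoeff w (k + 1)) * z ^ (n - 1 - k))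
      - cauchyCoeff (fun t => (γ t : ℂ)) 0 * z ^ n := by
  have hws : ContinuousOn w (sphere 0 1) := hc.mono sphere_subset_closedBall
  have hne : ∀ t ∈ sphere (0 : ℂ) 1, t ≠ 0 := fun t ht => ne_zero_of_mem_unit_sphere ⟨t, ht⟩
  have hnorm : ∀ t ∈ sphere (0 : ℂ) 1, ‖t‖ = 1 := fun t ht => by simpa using ht
  have hγ : ∀ t ∈ sphere (0 : ℂ) 1, 2 * (γ t : ℂ) = w t / t ^ n + conj (w t) * t ^ n :=
    fun t ht => by rw [← hbc t (hnorm t ht), two_mul_re_inv_pow_mul (hnorm t ht)]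
  have hcongr : EqOn (fun t => z ^ n * ((γ t : ℂ) * ((t + z) / (t - z)) / t))
      (fun t => z ^ n * (w t / (t ^ n * (t - z))) + z ^ n * (conj (w t) * t ^ n / (t - z))
        - z ^ n * ((γ t : ℂ) / t ^ (0 + 1))) (sphere 0 1) := by
    intro t ht
    dsimp only
    have ht0 := hne t ht
    have htz := sub_ne_zero_of_mem_sphere ht hz
    have hsplit : (γ t : ℂ) * ((t + z) / (t - z)) / t =
        2 * (γ t : ℂ) / (t - z) - (γ t : ℂ) / t ^ (0 + 1) := by
      field_simp
      ring
    rw [hsplit, hγ t ht]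
    field_simp
  have hγc : ContinuousOn (fun t => (γ t : ℂ)) (sphere 0 1) := by
    have hrhs : ContinuousOn (fun t => (w t / t ^ n + conj (w t) * t ^ n) / 2) (sphere 0 1) :=
      ((hws.div (by fun_prop) fun t ht => pow_ne_zero n (hne t ht)).add
        ((continuous_conj.comp_continuousOn hws).mul (by fun_prop))).div_const 2
    refine hrhs.congr fun t ht => ?_
    dsimp only
    rw [← hγ t ht]
    ring
  have hi1 : CircleIntegrable (fun t => z ^ n * (w t / (t ^ n * (t - z)))) 0 1 :=
    (continuousOn_const.mul (hws.div (by fun_prop) fun t ht => mul_ne_zero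
      (pow_ne_zero n (hne t ht)) (sub_ne_zero_of_mem_sphere ht hz))).circleIntegrable zero_le_one
  have hi2 : CircleIntegrable (fun t => z ^ n * (conj (w t) * t ^ n / (t - z))) 0 1 :=
    (continuousOn_const.mul (((continuous_conj.comp_continuousOn hws).mul (by fun_prop)).div
      (by fun_prop) fun t ht => sub_ne_zero_of_mem_sphere ht hz)).circleIntegrable zero_le_one
  have hi3 : CircleIntegrable (fun t => z ^ n * ((γ t : ℂ) / t ^ (0 + 1))) 0 1 :=
    (continuousOn_const.mul (hγc.div (by fun_prop) fun t ht =>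
      pow_ne_zero _ (hne t ht))).circleIntegrable zero_le_one
  have hS : 2 * π * I * (z ^ n * schwarzIntegral γ z) =
      ∮ t in C(0, 1), z ^ n * ((γ t : ℂ) * ((t + z) / (t - z)) / t) := by
    rw [schwarzIntegral, circleIntegral.integral_const_mul]
    field_simp
  rw [circleIntegral.integral_congr zero_le_one hcongr,
    circleIntegral.integral_sub ?_ hi3, circleIntegral.integral_add hi1 hi2,
    circleIntegral.integral_const_mul, circleIntegral.integral_const_mul,
    circleIntegral.integral_const_mul, pow_mul_circleIntegral_div_pow_mul_sub hd hc hz,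
    circleIntegral_conj_mul_pow_div_sub hd hc hz, circleIntegral_div_pow_eq] at hS
  · exact mul_left_cancel₀ two_pi_I_ne_zero (hS.trans (by ring))
  · exact hi1.add hi2

lemma C_mul_X_pow_mem_degreeLE {R : Type*} [Semiring R] (a : R) {k N : ℕ} (h : k ≤ N) :
    C a * X ^ k ∈ degreeLE R N :=
  mem_degreeLE.2 ((degree_C_mul_X_pow_le k a).trans (by exact_mod_cast h))

lemma exists_eval_eq_sum_fin_of_mem_degreeLE {R : Type*} [Semiring R] {p : R[X]} {N : ℕ}
    (hp : p ∈ degreeLE R N) :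
    ∃ c : Fin (N + 1) → R, ∀ x, p.eval x = ∑ k : Fin (N + 1), c k * x ^ (k : ℕ) :=
  ⟨fun k => p.coeff k, fun x => by
    rw [eval_eq_sum_range' (Nat.lt_succ_of_le (natDegree_le_iff_degree_le.2 (mem_degreeLE.1 hp))),
      Fin.sum_univ_eq_sum_range (fun k => p.coeff k * x ^ k)]⟩

noncomputable def riemannHilbertPoly (w : ℂ → ℂ) (γ : ℂ → ℝ) (n : ℕ) : ℂ[X] :=
  ∑ k ∈ Finset.range n, C (cauchyCoeff w k) * X ^ k
    - ∑ k ∈ Finset.range n, C (conj (cauchyCoeff w (k + 1))) * X ^ (2 * n - 1 - k)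
    - C (conj (w 0)) * X ^ (2 * n) + C (cauchyCoeff (fun t => (γ t : ℂ)) 0) * X ^ n

lemma riemannHilbertPoly_mem_degreeLE (w : ℂ → ℂ) (γ : ℂ → ℝ) (n : ℕ) :
    riemannHilbertPoly w γ n ∈ degreeLE ℂ ↑(2 * n) := by
  refine add_mem (sub_mem (sub_mem ?_ ?_) (C_mul_X_pow_mem_degreeLE _ le_rfl))
    (C_mul_X_pow_mem_degreeLE _ (by omega))
  · exact Submodule.sum_mem _ fun k hk =>
      C_mul_X_pow_mem_degreeLE _ (by simp only [Finset.mem_range] at hk; omega)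
  · exact Submodule.sum_mem _ fun k _ => C_mul_X_pow_mem_degreeLE _ (by omega)

lemma eq_pow_mul_schwarzIntegral_add_eval {n : ℕ} {w : ℂ → ℂ} {γ : ℂ → ℝ}
    (hd : DifferentiableOn ℂ w (ball 0 1)) (hc : ContinuousOn w (closedBall 0 1))
    (hbc : ∀ t : ℂ, ‖t‖ = 1 → ((t ^ n)⁻¹ * w t).re = γ t) {z : ℂ} (hz : z ∈ ball (0 : ℂ) 1) :
    w z = z ^ n * schwarzIntegral γ z + (riemannHilbertPoly w γ n).eval z := by
  have hreindex : ∑ k ∈ Finset.range n, conj (cauchyCoeff w (k + 1)) * z ^ (2 * n - 1 - k) =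
      z ^ n * ∑ k ∈ Finset.range n, conj (cauchyCoeff w (k + 1)) * z ^ (n - 1 - k) := by
    rw [Finset.mul_sum]
    refine Finset.sum_congr rfl fun k hk => ?_
    rw [Finset.mem_range] at hk
    rw [show 2 * n - 1 - k = n + (n - 1 - k) by omega, pow_add]
    ring
  rw [pow_mul_schwarzIntegral hd hc hbc hz]
  simp only [riemannHilbertPoly, eval_add, eval_sub, eval_finsetSum, eval_mul, eval_C,
    eval_pow, eval_X, hreindex]
  ring

theorem riemann_hilbert_representation_general
    (n : ℕ) (w : ℂ → ℂ) (γ : ℂ → ℝ)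
    (hw : DifferentiableOn ℂ w (ball (0:ℂ) 1))
    (hwc : ContinuousOn w (closedBall (0:ℂ) 1))
    (hbc : ∀ z : ℂ, ‖z‖ = 1 → ((z ^ n)⁻¹ * w z).re = γ z) :
    ∃ c : Fin (2 * n + 1) → ℂ, ∀ z ∈ ball (0:ℂ) 1,
      w z = z ^ n * ((1 / (2 * (Real.pi : ℂ) * Complex.I)) *
              ∮ t in C(0, 1), (γ t : ℂ) * ((t + z) / (t - z)) / t)
            + ∑ k : Fin (2 * n + 1), c k * z ^ (k : ℕ) := by
  obtain ⟨c, hc⟩ :=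
    exists_eval_eq_sum_fin_of_mem_degreeLE (riemannHilbertPoly_mem_degreeLE w γ n)
  refine ⟨c, fun z hz => ?_⟩
  rw [← hc]
  exact eq_pow_mul_schwarzIntegral_add_eval hw hwc hbc hz

/-- Riemann–Hilbert problem of positive index on the disk: if `w` is holomorphic on `𝔻`,
continuous on `𝔻̄`, and `Re(z^{-n} w(z)) = γ(z)` on `S¹` with `n > 0` and `γ ∈ C^β(S¹)`,
then `w(z) = zⁿ 𝒮γ(z) + Σ_{k=0}^{2n} c_k z^k`, where `𝒮γ` is the Schwarz integral. -/
theorem riemann_hilbert_representation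
    (n : ℕ) (hn : 0 < n) (β : ℝ) (hβ : 0 < β) (hβ1 : β < 1)
    (w : ℂ → ℂ) (γ : ℂ → ℝ) (H : ℝ)
    (hw : DifferentiableOn ℂ w (ball (0:ℂ) 1))
    (hwc : ContinuousOn w (closedBall (0:ℂ) 1))
    (hγ : ∀ z₁ z₂ : ℂ, ‖z₁‖ = 1 → ‖z₂‖ = 1 → |γ z₁ - γ z₂| ≤ H * ‖z₁ - z₂‖ ^ β)
    (hbc : ∀ z : ℂ, ‖z‖ = 1 → ((z ^ n)⁻¹ * w z).re = γ z) :
    ∃ c : Fin (2 * n + 1) → ℂ, ∀ z ∈ ball (0:ℂ) 1,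
      w z = z ^ n * ((1 / (2 * (Real.pi : ℂ) * Complex.I)) *
              ∮ t in C(0, 1), (γ t : ℂ) * ((t + z) / (t - z)) / t)
            + ∑ k : Fin (2 * n + 1), c k * z ^ (k : ℕ) :=
  riemann_hilbert_representation_general n w γ hw hwc hbc
end
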